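/- arXiv:2209.03426 — 5 statements merged into one kernel-verified Lean document; each statement's English description precedes it below -/
import Mathlib

section
/- Let r ≥ 2 and let G be obtained from a complete r-partite graph (each part nonempty) by adding exactly one edge inside one part. Then G contains no copy of B_{r,1}, the graph consisting of two copies of K_{r+1} sharing exactly one vertex. -/
open SimpleGraph

/-- If `G` is obtained from a complete `r`-partite graph (all parts nonempty,
`r ≥ 2`) by adding exactly one edge `uv` inside one part, then `G` contains no
copy of `B_{r,1}`, the graph consisting of two copies of `K_{r+1}` sharing
exactly one vertex. -/
theorem stmt_9 (r : ℕ) (hr : 2 ≤ r) (n : Fin r → ℕ) (hn : ∀ i, 1 ≤ n i)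
    (u v : Σ i : Fin r, Fin (n i)) (huv : u ≠ v) (hpart : u.1 = v.1)
    (B : SimpleGraph (Fin (2 * r + 1)))
    (hB : B = SimpleGraph.fromRel (fun i j =>
      (i.val ≤ r ∧ j.val ≤ r) ∨ (r ≤ i.val ∧ r ≤ j.val)))
    (G : SimpleGraph (Σ i : Fin r, Fin (n i)))
    (hG : G = SimpleGraph.fromRel (fun a b =>
      (completeMultipartiteGraph (fun i : Fin r => Fin (n i))).Adj a b ∨ (a = u ∧ b = v))) :
    ¬ ∃ f : B →g G, Function.Injective f := by
  subst hB hG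
  rintro ⟨f, hf⟩
  -- Any r+1 pairwise G-adjacent distinct vertices must include both u and v
  have key : ∀ g : Fin (r+1) → (Σ i : Fin r, Fin (n i)), Function.Injective g →
      (∀ k l, k ≠ l → (SimpleGraph.fromRel (fun a b =>
        (completeMultipartiteGraph (fun i : Fin r => Fin (n i))).Adj a b ∨
          (a = u ∧ b = v))).Adj (g k) (g l)) →
      (∃ k, g k = u) ∧ (∃ k, g k = v) := by
    intro g hg hadj
    have hcard : Fintype.card (Fin r) < Fintype.card (Fin (r+1)) := by
      simp
    obtain ⟨k, l, hkl, heq⟩ := Fintype.exists_ne_map_eq_of_card_lt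
      (fun k => (g k).1) hcard
    have hA := hadj k l hkl
    rw [SimpleGraph.fromRel_adj] at hA
    obtain ⟨hne, hA⟩ := hA
    rcases hA with (h | h) | (h | h)
    · exact absurd heq h
    · exact ⟨⟨k, h.1⟩, ⟨l, h.2⟩⟩
    · exact absurd heq.symm h
    · exact ⟨⟨l, h.1⟩, ⟨k, h.2⟩⟩
  -- first clique: indices 0..r
  have h1 : ∀ k : Fin (r+1), (k.val : ℕ) < 2*r+1 := by omega
  have h2 : ∀ k : Fin (r+1), (r + k.val : ℕ) < 2*r+1 := by omega
  set g1 : Fin (r+1) → (Σ i : Fin r, Fin (n i)) :=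
    fun k => f ⟨k.val, h1 k⟩ with hg1
  set g2 : Fin (r+1) → (Σ i : Fin r, Fin (n i)) :=
    fun k => f ⟨r + k.val, h2 k⟩ with hg2
  have hg1inj : Function.Injective g1 := by
    intro a b hab
    have := hf hab
    simpa [Fin.ext_iff] using congrArg Fin.val this
  have hg2inj : Function.Injective g2 := by
    intro a b hab
    have := hf hab
    rw [Fin.mk.injEq] at this
    exact Fin.ext (by omega)
  have hadj1 : ∀ k l : Fin (r+1), k ≠ l →
      (SimpleGraph.fromRel (fun a b =>
        (completeMultipartiteGraph (fun i : Fin r => Fin (n i))).Adj a b ∨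
          (a = u ∧ b = v))).Adj (g1 k) (g1 l) := by
    intro k l hkl
    apply f.map_adj
    rw [SimpleGraph.fromRel_adj]
    refine ⟨?_, Or.inl (Or.inl ⟨by simp; omega, by simp; omega⟩)⟩
    intro h
    exact hkl (Fin.ext (by simpa [Fin.ext_iff] using h))
  have hadj2 : ∀ k l : Fin (r+1), k ≠ l →
      (SimpleGraph.fromRel (fun a b =>
        (completeMultipartiteGraph (fun i : Fin r => Fin (n i))).Adj a b ∨
          (a = u ∧ b = v))).Adj (g2 k) (g2 l) := by
    intro k l hkl
    apply f.map_adj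
    rw [SimpleGraph.fromRel_adj]
    refine ⟨?_, Or.inl (Or.inr ⟨by simp, by simp⟩)⟩
    intro h
    have := congrArg Fin.val h
    simp only [Fin.val_mk] at this
    exact hkl (Fin.ext (by omega))
  obtain ⟨⟨a1, ha1⟩, ⟨b1, hb1⟩⟩ := key g1 hg1inj hadj1
  obtain ⟨⟨a2, ha2⟩, ⟨b2, hb2⟩⟩ := key g2 hg2inj hadj2
  -- f at index a1 = u = f at index r+a2, so a1 = r + a2, forcing a1.val = r, a2 = 0
  have hu : (⟨a1.val, h1 a1⟩ : Fin (2*r+1)) = ⟨r + a2.val, h2 a2⟩ :=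
    hf (by rw [show f ⟨a1.val, h1 a1⟩ = g1 a1 from rfl, ha1,
      show f ⟨r + a2.val, h2 a2⟩ = g2 a2 from rfl, ha2])
  have hv : (⟨b1.val, h1 b1⟩ : Fin (2*r+1)) = ⟨r + b2.val, h2 b2⟩ :=
    hf (by rw [show f ⟨b1.val, h1 b1⟩ = g1 b1 from rfl, hb1,
      show f ⟨r + b2.val, h2 b2⟩ = g2 b2 from rfl, hb2])
  have hu' : a1.val = r := by
    have := congrArg Fin.val hu
    simp at this
    omega
  have hv' : b1.val = r := by
    have := congrArg Fin.val hv
    simp at this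
    omega
  have : a1 = b1 := Fin.ext (by omega)
  exact huv (by rw [← ha1, ← hb1, this])
end

section
/- Let r ≥ 2 and let T be a complete r-partite graph with parts B_1, ..., B_r, each of size at least r+2. Suppose G is obtained from T by adding an edge u_1v_1 inside B_1 and an edge u_2v_2 inside B_2, where u_1, u_2, v_1, v_2 are pairwise adjacent in G except possibly for one missing pair among {u_1u_2, u_1v_2, v_1u_2, v_1v_2}. Then G contains two copies of K_{r+1} sharing exactly one vertex (i.e., G contains B_{r,1}). -/
open SimpleGraph

/-- Let `T` be a complete `r`-partite graph (`r ≥ 2`) with all parts of size at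
least `r + 2`. If `G` is obtained from `T` by adding an edge `u₁v₁` inside one
part and an edge `u₂v₂` inside another part, deleting at most one of the four
cross pairs among `{u₁,v₁} × {u₂,v₂}`, then `G` contains two copies of
`K_{r+1}` sharing exactly one vertex (i.e. a copy of `B_{r,1}`). -/
theorem stmt_10 (r : ℕ) (hr : 2 ≤ r) (n : Fin r → ℕ) (hn : ∀ i, r + 2 ≤ n i)
    (u1 v1 u2 v2 : Σ i : Fin r, Fin (n i))
    (h1 : u1.1 = v1.1) (h2 : u2.1 = v2.1) (h12 : u1.1 ≠ u2.1)
    (hu1v1 : u1 ≠ v1) (hu2v2 : u2 ≠ v2)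
    (p q : Σ i : Fin r, Fin (n i))
    (hp : p = u1 ∨ p = v1) (hq : q = u2 ∨ q = v2)
    (E : Set (Sym2 (Σ i : Fin r, Fin (n i)))) (hE : E ⊆ {s(p, q)})
    (G : SimpleGraph (Σ i : Fin r, Fin (n i)))
    (hG : G = (SimpleGraph.fromRel (fun a b =>
      (completeMultipartiteGraph (fun i : Fin r => Fin (n i))).Adj a b ∨
        (a = u1 ∧ b = v1) ∨ (a = u2 ∧ b = v2))) \ SimpleGraph.fromEdgeSet E) :
    ∃ S1 S2 : Finset (Σ i : Fin r, Fin (n i)),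
      G.IsNClique (r + 1) S1 ∧ G.IsNClique (r + 1) S2 ∧ (S1 ∩ S2).card = 1 := by
  classical
  have hq1 : q.1 = u2.1 := by rcases hq with h | h
                              · rw [h]
                              · rw [h, ← h2]
  have hp1 : p.1 = u1.1 := by rcases hp with h | h
                              · rw [h]
                              · rw [h, ← h1]
  obtain ⟨p', hp'm, hp'p⟩ : ∃ p' : (Σ i : Fin r, Fin (n i)), (p' = u1 ∨ p' = v1) ∧ p' ≠ p := by
    rcases hp with h | h
    · exact ⟨v1, Or.inr rfl, fun e => hu1v1 (h ▸ e.symm)⟩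
    · exact ⟨u1, Or.inl rfl, fun e => hu1v1 (h ▸ e)⟩
  have hp'1 : p'.1 = u1.1 := by rcases hp'm with h | h
                                · rw [h]
                                · rw [h, ← h1]
  obtain ⟨w, hwu, hwv⟩ : ∃ w : Fin (n u2.1),
      (⟨u2.1, w⟩ : Σ i : Fin r, Fin (n i)) ≠ u2 ∧ (⟨u2.1, w⟩ : Σ i : Fin r, Fin (n i)) ≠ v2 := by
    have h4 : 3 ≤ n u2.1 := le_trans (by omega) (hn u2.1)
    by_contra hc
    have hc' : ∀ w : Fin (n u2.1), (⟨u2.1, w⟩ : Σ i : Fin r, Fin (n i)) = u2 ∨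
        (⟨u2.1, w⟩ : Σ i : Fin r, Fin (n i)) = v2 := by
      intro w; by_contra h; push_neg at h; exact hc ⟨w, h⟩
    have inj : ∀ a b : Fin (n u2.1),
        (⟨u2.1, a⟩ : Σ i : Fin r, Fin (n i)) = ⟨u2.1, b⟩ → a = b := by
      intro a b h; simpa using h
    have f0 : (⟨0, by omega⟩ : Fin (n u2.1)) ≠ ⟨1, by omega⟩ := by simp [Fin.ext_iff]
    have f1 : (⟨0, by omega⟩ : Fin (n u2.1)) ≠ ⟨2, by omega⟩ := by simp [Fin.ext_iff]
    have f2 : (⟨1, by omega⟩ : Fin (n u2.1)) ≠ ⟨2, by omega⟩ := by simp [Fin.ext_iff]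
    rcases hc' ⟨0, by omega⟩ with ha | ha <;> rcases hc' ⟨1, by omega⟩ with hb | hb <;>
      rcases hc' ⟨2, by omega⟩ with hd | hd
    · exact f0 (inj _ _ (ha.trans hb.symm))
    · exact f0 (inj _ _ (ha.trans hb.symm))
    · exact f1 (inj _ _ (ha.trans hd.symm))
    · exact f2 (inj _ _ (hb.trans hd.symm))
    · exact f2 (inj _ _ (hb.trans hd.symm))
    · exact f1 (inj _ _ (ha.trans hd.symm))
    · exact f0 (inj _ _ (ha.trans hb.symm))
    · exact f0 (inj _ _ (ha.trans hb.symm))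
  have hadj : ∀ a b : (Σ i : Fin r, Fin (n i)), a ≠ b →
      (a.1 ≠ b.1 ∨ (a = u1 ∧ b = v1) ∨ (a = v1 ∧ b = u1) ∨ (a = u2 ∧ b = v2) ∨ (a = v2 ∧ b = u2)) →
      s(a, b) ≠ s(p, q) → G.Adj a b := by
    intro a b hne h hs
    rw [hG]
    simp only [SimpleGraph.sdiff_adj, SimpleGraph.fromRel_adj, SimpleGraph.fromEdgeSet_adj,
      comap_adj, top_adj]
    refine ⟨⟨hne, ?_⟩, fun hc => hs (hE hc.1)⟩
    rcases h with h | ⟨h, h'⟩ | ⟨h, h'⟩ | ⟨h, h'⟩ | ⟨h, h'⟩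
    · exact Or.inl (Or.inl h)
    · exact Or.inl (Or.inr (Or.inl ⟨h, h'⟩))
    · exact Or.inr (Or.inr (Or.inl ⟨h', h⟩))
    · exact Or.inl (Or.inr (Or.inr ⟨h, h'⟩))
    · exact Or.inr (Or.inr (Or.inr ⟨h', h⟩))
  have hpos : ∀ i : Fin r, 1 < n i := fun i => lt_of_lt_of_le (by omega) (hn i)
  set f : Fin r → (Σ i : Fin r, Fin (n i)) := fun i =>
    if i = u1.1 then u1 else if i = u2.1 then ⟨u2.1, w⟩
      else ⟨i, ⟨0, lt_trans Nat.zero_lt_one (hpos i)⟩⟩ with hf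
  set g : Fin r → (Σ i : Fin r, Fin (n i)) := fun i =>
    if i = u1.1 then p' else if i = u2.1 then u2 else ⟨i, ⟨1, hpos i⟩⟩ with hg
  have hf1 : ∀ i, (f i).1 = i := by
    intro i; rw [hf]; dsimp only
    split_ifs with ha hb
    · exact ha.symm
    · exact hb.symm
    · rfl
  have hg1 : ∀ i, (g i).1 = i := by
    intro i; rw [hg]; dsimp only
    split_ifs with ha hb
    · exact hp'1.trans ha.symm
    · exact hb.symm
    · rfl
  have hfu1 : f u1.1 = u1 := by rw [hf]; simp
  have hfu2 : f u2.1 = ⟨u2.1, w⟩ := by rw [hf]; simp [Ne.symm h12]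
  have hgu1 : g u1.1 = p' := by rw [hg]; simp
  have hgu2 : g u2.1 = u2 := by rw [hg]; simp [Ne.symm h12]
  set S1 : Finset (Σ i : Fin r, Fin (n i)) := insert v1 (Finset.image f Finset.univ) with hS1
  set S2 : Finset (Σ i : Fin r, Fin (n i)) := insert v2 (Finset.image g Finset.univ) with hS2
  have hv1f : v1 ∉ Finset.image f Finset.univ := by
    simp only [Finset.mem_image, Finset.mem_univ, true_and]
    rintro ⟨i, hi⟩
    have hiu : i = u1.1 := by rw [← hf1 i, hi, ← h1]
    subst hiu
    rw [hfu1] at hi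
    exact hu1v1 hi
  have hv2g : v2 ∉ Finset.image g Finset.univ := by
    simp only [Finset.mem_image, Finset.mem_univ, true_and]
    rintro ⟨i, hi⟩
    have hiu : i = u2.1 := by rw [← hg1 i, hi, ← h2]
    subst hiu
    rw [hgu2] at hi
    exact hu2v2 hi
  have hfinj : Function.Injective f := by
    intro a b h
    have := congrArg Sigma.fst h
    rwa [hf1, hf1] at this
  have hginj : Function.Injective g := by
    intro a b h
    have := congrArg Sigma.fst h
    rwa [hg1, hg1] at this
  have hqS1 : ∀ x ∈ S1, x ≠ q := by
    intro x hx hxq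
    subst hxq
    rw [hS1, Finset.mem_insert, Finset.mem_image] at hx
    rcases hx with h | ⟨i, -, hi⟩
    · exact h12 (h1.trans ((congrArg Sigma.fst h).symm.trans hq1))
    · have hi1 : i = u2.1 := by rw [← hf1 i, hi, hq1]
      subst hi1
      rw [hfu2] at hi
      rcases hq with h | h
      · exact hwu (hi.trans h)
      · exact hwv (hi.trans h)
  have hpS2 : ∀ x ∈ S2, x ≠ p := by
    intro x hx hxp
    subst hxp
    rw [hS2, Finset.mem_insert, Finset.mem_image] at hx
    rcases hx with h | ⟨i, -, hi⟩
    · exact h12 (hp1.symm.trans ((congrArg Sigma.fst h).trans h2.symm))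
    · have hi1 : i = u1.1 := by rw [← hg1 i, hi, hp1]
      subst hi1
      rw [hgu1] at hi
      exact hp'p hi
  have hsym1 : ∀ a ∈ S1, ∀ b ∈ S1, s(a, b) ≠ s(p, q) := by
    intro a ha b hb hs
    rw [Sym2.eq_iff] at hs
    rcases hs with ⟨-, h⟩ | ⟨h, -⟩
    · exact hqS1 b hb h
    · exact hqS1 a ha h
  have hsym2 : ∀ a ∈ S2, ∀ b ∈ S2, s(a, b) ≠ s(p, q) := by
    intro a ha b hb hs
    rw [Sym2.eq_iff] at hs
    rcases hs with ⟨h, -⟩ | ⟨-, h⟩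
    · exact hpS2 a ha h
    · exact hpS2 b hb h
  have hv1u1 : v1.1 = u1.1 := h1.symm
  have hv2u2 : v2.1 = u2.1 := h2.symm
  have hclique1 : G.IsNClique (r + 1) S1 := by
    constructor
    · intro a ha b hb hne
      have hs := hsym1 a ha b hb
      rw [hS1, Finset.coe_insert, Set.mem_insert_iff] at ha hb
      simp only [Finset.coe_image, Set.mem_image, Finset.mem_coe, Finset.mem_univ,
        true_and] at ha hb
      apply hadj a b hne _ hs
      rcases ha with ha | ⟨i, hi⟩
      · rcases hb with hb | ⟨j, hj⟩
        · exact absurd (ha.trans hb.symm) hne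
        · by_cases hj1 : j = u1.1
          · subst hj1; rw [hfu1] at hj
            exact Or.inr (Or.inr (Or.inl ⟨ha, hj.symm⟩))
          · refine Or.inl ?_
            rw [ha, hv1u1, ← hj, hf1]
            exact fun e => hj1 e.symm
      · rcases hb with hb | ⟨j, hj⟩
        · by_cases hi1 : i = u1.1
          · subst hi1; rw [hfu1] at hi
            exact Or.inr (Or.inl ⟨hi.symm, hb⟩)
          · refine Or.inl ?_
            rw [hb, hv1u1, ← hi, hf1]
            exact hi1
        · refine Or.inl ?_
          rw [← hi, ← hj, hf1, hf1]
          intro e; exact hne (by rw [← hi, ← hj, e])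
    · rw [hS1, Finset.card_insert_of_notMem hv1f,
        Finset.card_image_of_injective _ hfinj, Finset.card_univ, Fintype.card_fin]
  have hclique2 : G.IsNClique (r + 1) S2 := by
    constructor
    · intro a ha b hb hne
      have hs := hsym2 a ha b hb
      rw [hS2, Finset.coe_insert, Set.mem_insert_iff] at ha hb
      simp only [Finset.coe_image, Set.mem_image, Finset.mem_coe, Finset.mem_univ,
        true_and] at ha hb
      apply hadj a b hne _ hs
      rcases ha with ha | ⟨i, hi⟩
      · rcases hb with hb | ⟨j, hj⟩
        · exact absurd (ha.trans hb.symm) hne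
        · by_cases hj1 : j = u2.1
          · subst hj1; rw [hgu2] at hj
            exact Or.inr (Or.inr (Or.inr (Or.inr ⟨ha, hj.symm⟩)))
          · refine Or.inl ?_
            rw [ha, hv2u2, ← hj, hg1]
            exact fun e => hj1 e.symm
      · rcases hb with hb | ⟨j, hj⟩
        · by_cases hi1 : i = u2.1
          · subst hi1; rw [hgu2] at hi
            exact Or.inr (Or.inr (Or.inr (Or.inl ⟨hi.symm, hb⟩)))
          · refine Or.inl ?_
            rw [hb, hv2u2, ← hi, hg1]
            exact hi1
        · refine Or.inl ?_
          rw [← hi, ← hj, hg1, hg1]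
          intro e; exact hne (by rw [← hi, ← hj, e])
    · rw [hS2, Finset.card_insert_of_notMem hv2g,
        Finset.card_image_of_injective _ hginj, Finset.card_univ, Fintype.card_fin]
  have hinter : S1 ∩ S2 = {p'} := by
    apply Finset.ext
    intro x
    simp only [Finset.mem_inter, Finset.mem_singleton]
    constructor
    · rintro ⟨hx1, hx2⟩
      rw [hS1, Finset.mem_insert, Finset.mem_image] at hx1
      rw [hS2, Finset.mem_insert, Finset.mem_image] at hx2
      rcases hx1 with hx1 | ⟨i, -, hi⟩
      · rcases hx2 with hx2 | ⟨j, -, hj⟩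
        · exact absurd (by rw [← hv1u1, ← hx1, hx2, hv2u2]) h12
        · have hj1 : j = u1.1 := by rw [← hg1 j, hj, hx1, ← h1]
          subst hj1
          rw [hgu1] at hj
          exact hj.symm
      · rcases hx2 with hx2 | ⟨j, -, hj⟩
        · have hi1 : i = u2.1 := by rw [← hf1 i, hi, hx2, ← h2]
          subst hi1
          rw [hfu2] at hi
          exact absurd (hi.trans hx2) hwv
        · have hij : i = j := by rw [← hf1 i, ← hg1 j, hi, hj]
          subst hij
          by_cases hi1 : i = u1.1
          · subst hi1
            rw [hgu1] at hj
            exact hj.symm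
          · by_cases hi2 : i = u2.1
            · subst hi2
              rw [hfu2] at hi
              rw [hgu2] at hj
              exact absurd (hi.trans hj.symm) hwu
            · exfalso
              have hfg : f i = g i := hi.trans hj.symm
              rw [hf, hg] at hfg
              simp only [if_neg hi1, if_neg hi2] at hfg
              simp [Fin.ext_iff] at hfg
    · intro hx
      subst hx
      constructor
      · rw [hS1, Finset.mem_insert, Finset.mem_image]
        rcases hp'm with h | h
        · exact Or.inr ⟨u1.1, Finset.mem_univ _, by rw [hfu1, h]⟩
        · exact Or.inl h
      · rw [hS2, Finset.mem_insert, Finset.mem_image]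
        exact Or.inr ⟨u1.1, Finset.mem_univ _, hgu1⟩
  exact ⟨S1, S2, hclique1, hclique2, by rw [hinter, Finset.card_singleton]⟩
end

section
/- Let G be a graph with vertex partition A_1, ..., A_r, each of size at least c·n for some constant c > 0, such that every vertex of A_i is adjacent to all but at most d vertices outside A_i. Let F be a graph, F' an induced subgraph of F such that F minus V(F') admits a proper s-coloring (s ≤ r), and suppose a copy of F' is embedded in G using only vertices outside A_1 ∪ ... ∪ A_s. If c·n > |V(F)|·(d+1), then this copy of F' extends to a copy of F in G, where for each i ≤ s the i-th color class of F − V(F') is embedded into A_i. -/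
/-!
The copy of `F` is built greedily, one vertex `a ∉ S` at a time, inside the part `A i` of its
colour. Every already placed neighbour `w` of `a` lies in a part other than `A i`: for `w ∈ S`
because `φ` avoids the first `s` parts, and for `w ∉ S` because the colouring is proper. Hence
`ψ w` has at most `d` non-neighbours in `A i`. Together with the images of the at most `|V(F)|`
placed vertices, at most `|V(F)| (d + 1) < |A i|` vertices of `A i` are excluded, so a free
common neighbour of all placed neighbours of `a` is always available.
-/

variable {V W : Type*} {G : SimpleGraph V} {F : SimpleGraph W}

/-- `ψ` restricts to a (not necessarily induced) copy of `F[U]` in `G`. -/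
def IsCopyOn (F : SimpleGraph W) (G : SimpleGraph V) (ψ : W → V) (U : Set W) : Prop :=
  Set.InjOn ψ U ∧ ∀ v ∈ U, ∀ w ∈ U, F.Adj v w → G.Adj (ψ v) (ψ w)

namespace IsCopyOn

variable {ψ : W → V} {U : Set W} {a : W} {y : V}

theorem update_insert [DecidableEq W] (h : IsCopyOn F G ψ U) (ha : a ∉ U) (hy : y ∉ ψ '' U)
    (hadj : ∀ w ∈ U, F.Adj a w → G.Adj y (ψ w)) :
    IsCopyOn F G (Function.update ψ a y) (insert a U) := by
  have heq : Set.EqOn (Function.update ψ a y) ψ U := fun w hw =>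
    Function.update_of_ne (by rintro rfl; exact ha hw) _ _
  refine ⟨(Set.injOn_insert ha).2 ⟨h.1.congr heq.symm, ?_⟩, ?_⟩
  · rwa [heq.image_eq, Function.update_self]
  · rintro v (rfl | hv) w (rfl | hw) hvw
    · exact (F.loopless.irrefl _ hvw).elim
    · rw [Function.update_self, heq hw]
      exact hadj w hw hvw
    · rw [Function.update_self, heq hv]
      exact (hadj v hv hvw.symm).symm
    · rw [heq hv, heq hw]
      exact h.2 v hv w hw hvw

theorem exists_update_insert [Finite V] [DecidableEq W] {U : Finset W}
    (h : IsCopyOn F G ψ U) (ha : a ∉ U) {X : Set V} {d : ℕ}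
    (hbad : ∀ w ∈ U, F.Adj a w → {y | y ∈ X ∧ ¬ G.Adj (ψ w) y}.ncard ≤ d)
    (hX : U.card * (d + 1) < X.ncard) :
    ∃ y ∈ X, IsCopyOn F G (Function.update ψ a y) (insert a U) := by
  set nonadj : W → Set V := fun w => {y | y ∈ X ∧ F.Adj a w ∧ ¬ G.Adj (ψ w) y}
  have hnonadj : ∀ w ∈ U, (nonadj w).ncard ≤ d := by
    intro w hw
    by_cases haw : F.Adj a w
    · simpa only [nonadj, haw, true_and] using hbad w hw haw
    · simp [nonadj, haw]
  have hexcluded : (ψ '' U ∪ ⋃ w ∈ U, nonadj w).ncard < X.ncard := calc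
    _ ≤ (ψ '' U).ncard + (⋃ w ∈ U, nonadj w).ncard := Set.ncard_union_le _ _
    _ ≤ U.card + ∑ w ∈ U, (nonadj w).ncard := by
      gcongr
      · exact (Set.ncard_image_le U.finite_toSet).trans (Set.ncard_coe_finset U).le
      · exact U.set_ncard_biUnion_le nonadj
    _ ≤ U.card + U.card * d := by
      gcongr
      simpa using Finset.sum_le_sum hnonadj
    _ < X.ncard := by linarith
  obtain ⟨y, hyX, hy⟩ := Set.exists_mem_notMem_of_ncard_lt_ncard hexcluded
  simp only [Set.mem_union, Set.mem_iUnion, not_or, not_exists] at hy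
  refine ⟨y, hyX, h.update_insert (by exact_mod_cast ha) hy.1 fun w hw haw => ?_⟩
  by_contra hne
  exact hy.2 w hw ⟨hyX, haw, fun hwy => hne hwy.symm⟩

end IsCopyOn

theorem exists_injective_hom_extending [Fintype W] [Finite V] {S : Finset W} {φ : W → V}
    (hφ : IsCopyOn F G φ S) (X : W → Set V) (d : ℕ)
    (hX : ∀ w ∉ S, Fintype.card W * (d + 1) < (X w).ncard)
    (hfixed : ∀ v ∈ S, ∀ w ∉ S, F.Adj v w → {y | y ∈ X w ∧ ¬ G.Adj (φ v) y}.ncard ≤ d)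
    (hfree : ∀ v w, v ∉ S → w ∉ S → F.Adj v w →
      ∀ x ∈ X v, {y | y ∈ X w ∧ ¬ G.Adj x y}.ncard ≤ d) :
    ∃ ψ : W → V, Function.Injective ψ ∧ (∀ w ∈ S, ψ w = φ w) ∧
      (∀ v w, F.Adj v w → G.Adj (ψ v) (ψ w)) ∧ ∀ w ∉ S, ψ w ∈ X w := by
  classical
  have hpartial : ∀ T : Finset W, (∀ w ∈ T, w ∉ S) → ∃ ψ : W → V,
      IsCopyOn F G ψ ↑(S ∪ T) ∧ (∀ w ∈ S, ψ w = φ w) ∧ ∀ w ∈ T, ψ w ∈ X w := by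
    intro T
    induction T using Finset.induction_on with
    | empty => exact fun _ => ⟨φ, by simpa using hφ, fun _ _ => rfl, by simp⟩
    | @insert a T haT ih =>
      intro hT
      have haS : a ∉ S := hT a (Finset.mem_insert_self a T)
      obtain ⟨ψ, hψ, hψS, hψX⟩ := ih fun w hw => hT w (Finset.mem_insert_of_mem hw)
      have hbad : ∀ w ∈ S ∪ T, F.Adj a w → {y | y ∈ X a ∧ ¬ G.Adj (ψ w) y}.ncard ≤ d := by
        intro w hw haw
        rcases Finset.mem_union.mp hw with hwS | hwT
        · rw [hψS w hwS]
          exact hfixed w hwS a haS haw.symm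
        · exact hfree w a (hT w (Finset.mem_insert_of_mem hwT)) haS haw.symm _ (hψX w hwT)
      obtain ⟨y, hyX, hy⟩ := hψ.exists_update_insert (by simp [haS, haT]) hbad
        ((Nat.mul_le_mul_right _ (Finset.card_le_univ _)).trans_lt (hX a haS))
      refine ⟨Function.update ψ a y, by simpa using hy, fun w hw => ?_, fun w hw => ?_⟩
      · rw [Function.update_of_ne (by rintro rfl; exact haS hw)]
        exact hψS w hw
      · rcases Finset.mem_insert.mp hw with rfl | hwT
        · simpa using hyX
        · rw [Function.update_of_ne (by rintro rfl; exact haT hwT)]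
          exact hψX w hwT
  obtain ⟨ψ, ⟨hinj, hadj⟩, hψS, hψX⟩ := hpartial Sᶜ fun w hw => Finset.mem_compl.mp hw
  simp only [Finset.union_compl, Finset.coe_univ, Set.mem_univ, forall_const] at hinj hadj
  exact ⟨ψ, Set.injOn_univ.mp hinj, hψS, hadj, fun w hw => hψX w (by simpa)⟩

theorem stmt_11_general {V W : Type} [Fintype V] [Fintype W]
    (G : SimpleGraph V) (F : SimpleGraph W)
    (r s : ℕ) (hsr : s ≤ r) (c : ℝ) (d : ℕ)
    (A : Fin r → Set V) (hpart : ∀ x : V, ∃! i, x ∈ A i)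
    (hsize : ∀ i, c * (Fintype.card V : ℝ) ≤ ((A i).ncard : ℝ))
    (hnonadj : ∀ i, ∀ x ∈ A i, ({y | y ∉ A i ∧ ¬ G.Adj x y}).ncard ≤ d)
    (S : Finset W) (col : W → Fin s)
    (hcol : ∀ v w, v ∉ S → w ∉ S → F.Adj v w → col v ≠ col w)
    (φ : W → V)
    (hinj : ∀ v ∈ S, ∀ w ∈ S, φ v = φ w → v = w)
    (hhom : ∀ v ∈ S, ∀ w ∈ S, F.Adj v w → G.Adj (φ v) (φ w))
    (havoid : ∀ w ∈ S, ∀ i : Fin r, i.val < s → φ w ∉ A i)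
    (hbig : (Fintype.card W : ℝ) * (d + 1) < c * (Fintype.card V : ℝ)) :
    ∃ ψ : W → V, Function.Injective ψ ∧ (∀ w ∈ S, ψ w = φ w) ∧
      (∀ v w, F.Adj v w → G.Adj (ψ v) (ψ w)) ∧
      ∀ w, w ∉ S → ψ w ∈ A (Fin.castLE hsr (col w)) := by
  have hother : ∀ i j, i ≠ j → ∀ x ∈ A i, {y | y ∈ A j ∧ ¬ G.Adj x y}.ncard ≤ d := by
    intro i j hij x hx
    have hsub : {y | y ∈ A j ∧ ¬ G.Adj x y} ⊆ {y | y ∉ A i ∧ ¬ G.Adj x y} :=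
      fun y hy => ⟨fun hyi => hij ((hpart y).unique hyi hy.1), hy.2⟩
    exact (Set.ncard_le_ncard hsub).trans (hnonadj i x hx)
  refine exists_injective_hom_extending ⟨hinj, hhom⟩ _ d
    (fun w _ => by exact_mod_cast hbig.trans_le (hsize _)) ?_ ?_
  · intro v hv w _ _
    obtain ⟨j, hj, -⟩ := hpart (φ v)
    refine hother j _ ?_ _ hj
    rintro rfl
    exact havoid v hv _ (col w).isLt hj
  · intro v w hv hw hvw
    exact hother _ _ (fun h => hcol v w hv hw hvw (Fin.castLE_injective hsr h))

/-- Greedy extension lemma: let `G` have a vertex partition `A 1, …, A r` with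
parts of size at least `c·n` (`n = |V(G)|`), in which every vertex is adjacent
to all but at most `d` vertices outside its own part. Let `F'` (given by the
vertex subset `S` of `F`) be an induced subgraph of `F` such that `F − V(F')`
has a proper `s`-coloring `col` (`s ≤ r`), and suppose a copy `φ` of `F'` is
embedded in `G` avoiding `A 1 ∪ … ∪ A s`. If `c·n > |V(F)|·(d+1)`, then this
copy extends to a copy of `F` in `G`, with the `i`-th color class embedded
into `A i`. -/
theorem stmt_11 {V W : Type} [Fintype V] [Fintype W]
    (G : SimpleGraph V) (F : SimpleGraph W)
    (r s : ℕ) (hsr : s ≤ r) (c : ℝ) (hc : 0 < c) (d : ℕ)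
    (A : Fin r → Set V) (hpart : ∀ x : V, ∃! i, x ∈ A i)
    (hsize : ∀ i, c * (Fintype.card V : ℝ) ≤ ((A i).ncard : ℝ))
    (hnonadj : ∀ i, ∀ x ∈ A i, ({y | y ∉ A i ∧ ¬ G.Adj x y}).ncard ≤ d)
    (S : Finset W) (col : W → Fin s)
    (hcol : ∀ v w, v ∉ S → w ∉ S → F.Adj v w → col v ≠ col w)
    (φ : W → V)
    (hinj : ∀ v ∈ S, ∀ w ∈ S, φ v = φ w → v = w)
    (hhom : ∀ v ∈ S, ∀ w ∈ S, F.Adj v w → G.Adj (φ v) (φ w))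
    (havoid : ∀ w ∈ S, ∀ i : Fin r, i.val < s → φ w ∉ A i)
    (hbig : (Fintype.card W : ℝ) * (d + 1) < c * (Fintype.card V : ℝ)) :
    ∃ ψ : W → V, Function.Injective ψ ∧ (∀ w ∈ S, ψ w = φ w) ∧
      (∀ v w, F.Adj v w → G.Adj (ψ v) (ψ w)) ∧
      ∀ w, w ∉ S → ψ w ∈ A (Fin.castLE hsr (col w)) :=
  stmt_11_general G F r s hsr c d A hpart hsize hnonadj S col hcol φ hinj hhom havoid hbig
end

section
/- Let r ≥ 3 and let Q_r be the graph obtained from the complete (r+1)-partite graph K_{1,2,2,...,2} (one part of size 1 and r parts of size 2) by deleting all but two independent edges between the last two parts A_r and A_{r+1}. Let G_m be obtained from a complete r-partite graph T with parts B_1,...,B_m,...,B_r (each of size at least 2) by adding one edge u_iv_i inside B_i for each i ≤ m, and deleting the edges u_iu_j and v_iv_j for all 1 ≤ i < j ≤ m. Then G_m contains no copy of Q_r. -/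
/-!
Pull the partition of `G_m` back along an embedding `f : Q_r → G_m`. Inside a part `B_i` the
graph `G_m` has the single edge `uᵢvᵢ`, so each fiber spans at most one edge of `Q_r`. The
complement of `Q_r` is triangle-free, so such a fiber has at most three vertices, and a fiber
with three vertices lies in `A_r ∪ A_{r+1}`, the only vertices with two non-neighbours. As
`2r + 1` vertices fall into `r` fibers, exactly one fiber has three vertices and all others two.
Hence the apex `A_1` and its fiber partner are mapped onto some `u_k v_k`, and an edge of the
three-vertex fiber onto `u_j v_j` with `j ≠ k`, both `j, k ≤ m`. The apex is adjacent to both ends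
of that edge, but its image `u_k` or `v_k` misses `u_j` or `v_j` respectively.
-/

open SimpleGraph Finset

theorem sigma_fin_ext {ι : Type*} {n : ι → ℕ} {v w : Σ i, Fin (n i)}
    (h₁ : v.1 = w.1) (h₂ : v.2.val = w.2.val) : v = w := by
  obtain ⟨i, a⟩ := v
  obtain ⟨j, b⟩ := w
  subst h₁
  exact congrArg (Sigma.mk i) (Fin.ext h₂)

theorem Fintype.exists_eq_three_and_forall_ne_eq_two {ι : Type*} [Fintype ι] (c : ι → ℕ)
    (hc : ∀ i, c i ≤ 3) (hunique : ∀ i j, 2 < c i → 2 < c j → i = j)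
    (hsum : ∑ i, c i = 2 * Fintype.card ι + 1) : ∃ i₀, c i₀ = 3 ∧ ∀ i ≠ i₀, c i = 2 := by
  classical
  obtain ⟨i₀, hi₀⟩ : ∃ i₀, 3 ≤ c i₀ := by
    by_contra! h
    have : ∑ i, c i ≤ ∑ _i : ι, 2 := sum_le_sum fun i _ => by have := h i; omega
    simp only [sum_const, card_univ, smul_eq_mul] at this
    omega
  refine ⟨i₀, le_antisymm (hc i₀) hi₀, fun i hii₀ => ?_⟩
  have hle (j : ι) : c j ≤ 2 + if j = i₀ then 1 else 0 := by
    split_ifs with hj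
    · exact hj ▸ hc i₀
    · by_contra! h
      exact hj (hunique j i₀ (by omega) hi₀)
  by_contra! hi
  have : ∑ j, c j < ∑ j, (2 + if j = i₀ then 1 else 0) :=
    sum_lt_sum (fun j _ => hle j)
      ⟨i, mem_univ i, by have := hle i; simp only [hii₀, if_false] at this ⊢; omega⟩
  simp [sum_add_distrib] at this
  omega

namespace SimpleGraph

variable {V W : Type*} {H : SimpleGraph V} {K : SimpleGraph W}

theorem edgeSet_inter_sym2_preimage_subsingleton {f : H →g K} (hf : Function.Injective f)
    {s : Set W} (hs : (K.edgeSet ∩ s.sym2).Subsingleton) :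
    (H.edgeSet ∩ (f ⁻¹' s).sym2).Subsingleton := by
  rintro e ⟨he, hes⟩ e' ⟨he', hes'⟩
  induction e using Sym2.ind
  induction e' using Sym2.ind
  exact Sym2.map.injective hf (hs ⟨f.map_mem_edgeSet he, hes⟩ ⟨f.map_mem_edgeSet he', hes'⟩)

theorem not_adj_of_edgeSet_inter_sym2_subsingleton {s : Finset V}
    (hs : (H.edgeSet ∩ (s : Set V).sym2).Subsingleton) {p q t : V} (hp : p ∈ s) (hq : q ∈ s)
    (ht : t ∈ s) (hpq : H.Adj p q) (htq : t ≠ q) : ¬H.Adj t p := fun htp => by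
  have := hs ⟨htp, Set.mk_mem_sym2_iff.mpr ⟨ht, hp⟩⟩ ⟨hpq, Set.mk_mem_sym2_iff.mpr ⟨hp, hq⟩⟩
  grind [Sym2.eq_iff]

namespace IndepSetFree

theorem exists_adj (hH : H.IndepSetFree 3) {a b c : V} (hab : a ≠ b) (hac : a ≠ c)
    (hbc : b ≠ c) : H.Adj a b ∨ H.Adj a c ∨ H.Adj b c := by
  classical
  by_contra! h
  refine (H.cliqueFree_compl.mpr hH) {a, b, c} (is3Clique_triple_iff.mpr ?_)
  simp_all [compl_adj]

theorem exists_adj_of_two_lt_card (hH : H.IndepSetFree 3) {s : Finset V} (hs : 2 < #s) :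
    ∃ p ∈ s, ∃ q ∈ s, H.Adj p q := by
  obtain ⟨a, ha, b, hb, c, hc, hab, hac, hbc⟩ := two_lt_card.mp hs
  rcases hH.exists_adj hab hac hbc with h | h | h
  exacts [⟨a, ha, b, hb, h⟩, ⟨a, ha, c, hc, h⟩, ⟨b, hb, c, hc, h⟩]

theorem card_le_three (hH : H.IndepSetFree 3) {s : Finset V}
    (hs : (H.edgeSet ∩ (s : Set V).sym2).Subsingleton) : #s ≤ 3 := by
  classical
  by_contra! h
  obtain ⟨p, hp, q, hq, hpq⟩ := hH.exists_adj_of_two_lt_card (s := s) (by omega)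
  obtain ⟨p', hp', q', hq', hpq'⟩ :=
    hH.exists_adj_of_two_lt_card (s := s.erase q) (by rw [card_erase_of_mem hq]; omega)
  have := hs ⟨hpq, Set.mk_mem_sym2_iff.mpr ⟨hp, hq⟩⟩
    ⟨hpq', Set.mk_mem_sym2_iff.mpr ⟨mem_of_mem_erase hp', mem_of_mem_erase hq'⟩⟩
  grind [Sym2.eq_iff, ne_of_mem_erase]

end IndepSetFree

end SimpleGraph

abbrev QVert (r : ℕ) := Σ i : Fin (r + 1), Fin (if i.val = 0 then 1 else 2)

/-- The paper's `Q_r`: part `0` is `A_1`, and parts `r - 1`, `r` are `A_r`, `A_{r+1}`, joined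
by the matching of equal second coordinates. -/
def qGraph (r : ℕ) : SimpleGraph (QVert r) :=
  SimpleGraph.fromRel (fun a b => a.1 ≠ b.1 ∧
    (((a.1.val = r - 1 ∧ b.1.val = r) ∨ (a.1.val = r ∧ b.1.val = r - 1)) → a.2.val = b.2.val))

namespace QVert

variable {r : ℕ}

def apex (r : ℕ) : QVert r := ⟨0, 0, by simp⟩

def lastTwoParts (r : ℕ) : Finset (QVert r) := {v | r - 1 ≤ v.1.val}

@[simp]
theorem mem_lastTwoParts {v : QVert r} : v ∈ lastTwoParts r ↔ r - 1 ≤ v.1.val := by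
  simp [lastTwoParts]

theorem snd_lt_two (v : QVert r) : v.2.val < 2 := by
  have := v.2.isLt
  split_ifs at this <;> omega

theorem card_eq : Fintype.card (QVert r) = 2 * r + 1 := by
  simp [Fintype.card_sigma, Fin.sum_univ_succ, Fin.succ_ne_zero]
  ring

theorem card_lastTwoParts_le : #(lastTwoParts r) ≤ 4 := by
  calc #(lastTwoParts r)
      ≤ #(({⟨r - 1, by omega⟩, Fin.last r} : Finset (Fin (r + 1))).sigma fun _ => univ) :=
        card_le_card fun v hv => by
          rw [mem_lastTwoParts] at hv
          simp only [mem_sigma, mem_insert, mem_singleton, Fin.ext_iff, Fin.val_last, mem_univ,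
            and_true]
          omega
    _ ≤ 2 * 2 := by
        rw [card_sigma]
        refine (sum_le_card_nsmul _ _ 2 fun i _ => ?_).trans ?_
        · simp only [card_univ, Fintype.card_fin]
          split_ifs <;> omega
        · rw [smul_eq_mul]
          exact Nat.mul_le_mul_right 2 card_le_two

theorem apex_notMem_lastTwoParts (hr : 2 ≤ r) : apex r ∉ lastTwoParts r := by
  simp [apex]
  omega

end QVert

namespace qGraph

variable {r : ℕ} {a b p q t v : QVert r}

theorem adj_iff : (qGraph r).Adj a b ↔ a.1 ≠ b.1 ∧
    (((a.1.val = r - 1 ∧ b.1.val = r) ∨ (a.1.val = r ∧ b.1.val = r - 1)) → a.2.val = b.2.val) := by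
  simp only [qGraph, fromRel_adj]
  grind

theorem snd_ne_of_not_adj (hab : a ≠ b) (h : ¬(qGraph r).Adj a b) : a.2.val ≠ b.2.val := by
  rw [adj_iff] at h
  by_cases h₁ : a.1 = b.1
  · exact fun h₂ => hab (sigma_fin_ext h₁ h₂)
  · grind

theorem fst_eq_or_of_not_adj (h : ¬(qGraph r).Adj a b) :
    a.1 = b.1 ∨ (a.1.val = r - 1 ∧ b.1.val = r) ∨ (a.1.val = r ∧ b.1.val = r - 1) := by
  rw [adj_iff] at h
  grind

theorem indepSetFree_three : (qGraph r).IndepSetFree 3 := by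
  intro s hs
  obtain ⟨a, b, c, hab, hac, hbc, rfl⟩ := card_eq_three.mp hs.card_eq
  have hind := hs.isIndepSet
  have h₁ := snd_ne_of_not_adj hab (hind (by simp) (by simp) hab)
  have h₂ := snd_ne_of_not_adj hac (hind (by simp) (by simp) hac)
  have h₃ := snd_ne_of_not_adj hbc (hind (by simp) (by simp) hbc)
  have := a.snd_lt_two
  have := b.snd_lt_two
  have := c.snd_lt_two
  omega

theorem apex_adj (hr : 2 ≤ r) (hv : v ≠ QVert.apex r) : (qGraph r).Adj (QVert.apex r) v := by
  refine adj_iff.mpr ⟨fun h => hv (sigma_fin_ext h.symm ?_), fun h => ?_⟩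
  · obtain ⟨i, x⟩ := v
    obtain rfl : 0 = i := h
    have := x.isLt
    simp only [Fin.val_zero, if_pos] at this
    simp only [QVert.apex]
    omega
  · simp [QVert.apex] at h
    omega

theorem mem_lastTwoParts_of_not_adj (hpq : (qGraph r).Adj p q) (htp : ¬(qGraph r).Adj t p)
    (htq : ¬(qGraph r).Adj t q) :
    t ∈ QVert.lastTwoParts r ∧ p ∈ QVert.lastTwoParts r ∧ q ∈ QVert.lastTwoParts r := by
  simp only [QVert.mem_lastTwoParts]
  have := fst_eq_or_of_not_adj htp
  have := fst_eq_or_of_not_adj htq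
  have := (adj_iff.mp hpq).1
  have := t.1.isLt
  simp only [ne_eq, Fin.ext_iff] at *
  omega

theorem subset_lastTwoParts {s : Finset (QVert r)} (hs₃ : 2 < #s)
    (hs : ((qGraph r).edgeSet ∩ (s : Set (QVert r)).sym2).Subsingleton) :
    s ⊆ QVert.lastTwoParts r := by
  classical
  obtain ⟨p, hp, q, hq, hpq⟩ := indepSetFree_three.exists_adj_of_two_lt_card hs₃
  have key (t : QVert r) (ht : t ∈ s) (htp : t ≠ p) (htq : t ≠ q) :
      t ∈ QVert.lastTwoParts r ∧ p ∈ QVert.lastTwoParts r ∧ q ∈ QVert.lastTwoParts r :=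
    mem_lastTwoParts_of_not_adj hpq (not_adj_of_edgeSet_inter_sym2_subsingleton hs hp hq ht hpq htq)
      (not_adj_of_edgeSet_inter_sym2_subsingleton hs hq hp ht hpq.symm htp)
  obtain ⟨t, ht, htp, htq⟩ : ∃ t ∈ s, t ≠ p ∧ t ≠ q := by
    obtain ⟨t, ht⟩ : ((s.erase p).erase q).Nonempty := by
      rw [← card_pos, card_erase_of_mem (mem_erase.mpr ⟨hpq.ne.symm, hq⟩), card_erase_of_mem hp]
      omega
    simp only [mem_erase] at ht
    exact ⟨t, ht.2.2, ht.2.1, ht.1⟩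
  intro v hv
  by_cases hvp : v = p
  · exact hvp ▸ (key t ht htp htq).2.1
  by_cases hvq : v = q
  · exact hvq ▸ (key t ht htp htq).2.2
  exact (key v hv hvp hvq).1

end qGraph

/-- The paper's `G_m`, with `uᵢ = ⟨i, 0⟩` and `vᵢ = ⟨i, 1⟩`. -/
def gGraph {r : ℕ} (m : ℕ) (n : Fin r → ℕ) : SimpleGraph (Σ i : Fin r, Fin (n i)) :=
  SimpleGraph.fromRel (fun a b =>
    if a.1 = b.1 then a.1.val < m ∧ a.2.val ≤ 1 ∧ b.2.val ≤ 1
    else ¬ (a.1.val < m ∧ b.1.val < m ∧ a.2.val ≤ 1 ∧ a.2.val = b.2.val))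

namespace gGraph

variable {r m : ℕ} {n : Fin r → ℕ} {a b : Σ i : Fin r, Fin (n i)}

theorem lt_of_adj_of_fst_eq (h : (gGraph m n).Adj a b) (hab : a.1 = b.1) :
    a.1.val < m ∧ a.2.val ≤ 1 ∧ b.2.val ≤ 1 := by
  simp only [gGraph, fromRel_adj, hab, if_true] at h
  grind

theorem not_adj_of_snd_eq (ha : a.1.val < m) (hb : b.1.val < m) (ha₂ : a.2.val ≤ 1)
    (hab : a.2.val = b.2.val) : ¬(gGraph m n).Adj a b := by
  intro h
  by_cases h₁ : a.1 = b.1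
  · exact h.ne (sigma_fin_ext h₁ hab)
  · simp only [gGraph, fromRel_adj, h₁, Ne.symm h₁, if_false] at h
    grind

theorem edgeSet_inter_part_subsingleton (i : Fin r) :
    ((gGraph m n).edgeSet ∩ {v | v.1 = i}.sym2).Subsingleton := by
  rintro e ⟨he, hei⟩ e' ⟨he', hei'⟩
  induction e using Sym2.ind with | h a b => ?_
  induction e' using Sym2.ind with | h a' b' => ?_
  simp only [Set.mk_mem_sym2_iff, Set.mem_ofPred_eq, mem_edgeSet] at hei hei' he he'
  have := lt_of_adj_of_fst_eq he (hei.1.trans hei.2.symm)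
  have := lt_of_adj_of_fst_eq he' (hei'.1.trans hei'.2.symm)
  have : a.2.val ≠ b.2.val := fun h => he.ne (sigma_fin_ext (hei.1.trans hei.2.symm) h)
  have : a'.2.val ≠ b'.2.val := fun h => he'.ne (sigma_fin_ext (hei'.1.trans hei'.2.symm) h)
  rw [Sym2.eq_iff]
  by_cases h : a.2.val = a'.2.val
  · exact .inl ⟨sigma_fin_ext (hei.1.trans hei'.1.symm) h,
      sigma_fin_ext (hei.2.trans hei'.2.symm) (by omega)⟩
  · exact .inr ⟨sigma_fin_ext (hei.1.trans hei'.2.symm) (by omega),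
      sigma_fin_ext (hei.2.trans hei'.1.symm) (by omega)⟩

theorem not_adj_and_adj_of_adj_of_fst_eq {c d : Σ i : Fin r, Fin (n i)}
    (hab : (gGraph m n).Adj a b) (hab₁ : a.1 = b.1) (hcd : (gGraph m n).Adj c d)
    (hcd₁ : c.1 = d.1) : ¬((gGraph m n).Adj a c ∧ (gGraph m n).Adj a d) := by
  rintro ⟨hac, had⟩
  obtain ⟨ham, ha₂, -⟩ := lt_of_adj_of_fst_eq hab hab₁
  obtain ⟨hcm, hc₂, hd₂⟩ := lt_of_adj_of_fst_eq hcd hcd₁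
  have hcd₂ : c.2.val ≠ d.2.val := fun h => hcd.ne (sigma_fin_ext hcd₁ h)
  rcases (by omega : a.2.val = c.2.val ∨ a.2.val = d.2.val) with h | h
  · exact not_adj_of_snd_eq ham hcm ha₂ h hac
  · exact not_adj_of_snd_eq ham (hcd₁ ▸ hcm) ha₂ h had

end gGraph

namespace qGraph

variable {r m : ℕ} {n : Fin r → ℕ} {f : qGraph r →g gGraph m n} {v : QVert r} {i j : Fin r}

variable (f) in
def fiber (i : Fin r) : Finset (QVert r) := {v | (f v).1 = i}

theorem mem_fiber : v ∈ fiber f i ↔ (f v).1 = i := by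
  simp [fiber]

variable (f) in
theorem sum_card_fiber : ∑ i, #(fiber f i) = 2 * Fintype.card (Fin r) + 1 := by
  classical
  rw [Fintype.card_fin, ← QVert.card_eq (r := r), ← card_univ (α := QVert r),
    card_eq_sum_card_fiberwise (f := fun v => (f v).1) fun _ _ => mem_univ _]
  rfl

theorem edgeSet_inter_fiber_subsingleton (hf : Function.Injective f) (i : Fin r) :
    ((qGraph r).edgeSet ∩ (fiber f i : Set (QVert r)).sym2).Subsingleton := by
  simpa [fiber] using
    edgeSet_inter_sym2_preimage_subsingleton hf (gGraph.edgeSet_inter_part_subsingleton i)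

theorem fiber_subset_lastTwoParts (hf : Function.Injective f) (hi : 2 < #(fiber f i)) :
    fiber f i ⊆ QVert.lastTwoParts r :=
  subset_lastTwoParts hi (edgeSet_inter_fiber_subsingleton hf i)

theorem eq_of_two_lt_card_fiber (hf : Function.Injective f) (hi : 2 < #(fiber f i))
    (hj : 2 < #(fiber f j)) : i = j := by
  by_contra hij
  have hdisj : Disjoint (fiber f i) (fiber f j) :=
    disjoint_filter.mpr fun v _ hvi hvj => hij (hvi ▸ hvj)
  have := card_le_card
    (union_subset (fiber_subset_lastTwoParts hf hi) (fiber_subset_lastTwoParts hf hj))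
  rw [card_union_of_disjoint hdisj] at this
  have := QVert.card_lastTwoParts_le (r := r)
  omega

end qGraph

theorem stmt_12_general (r m : ℕ) (hr : 3 ≤ r)
    (n : Fin r → ℕ)
    (Q : SimpleGraph (Σ i : Fin (r + 1), Fin (if i.val = 0 then 1 else 2)))
    (hQ : Q = SimpleGraph.fromRel (fun a b => a.1 ≠ b.1 ∧
      (((a.1.val = r - 1 ∧ b.1.val = r) ∨ (a.1.val = r ∧ b.1.val = r - 1)) →
        a.2.val = b.2.val)))
    (G : SimpleGraph (Σ i : Fin r, Fin (n i)))
    (hG : G = SimpleGraph.fromRel (fun a b =>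
      if a.1 = b.1 then a.1.val < m ∧ a.2.val ≤ 1 ∧ b.2.val ≤ 1
      else ¬ (a.1.val < m ∧ b.1.val < m ∧ a.2.val ≤ 1 ∧ a.2.val = b.2.val))) :
    ¬ ∃ f : Q →g G, Function.Injective f := by
  obtain rfl : Q = qGraph r := hQ
  obtain rfl : G = gGraph m n := hG
  rintro ⟨f, hf⟩
  have hr₂ : 2 ≤ r := by omega
  obtain ⟨i₀, hi₀, htwo⟩ :=
    Fintype.exists_eq_three_and_forall_ne_eq_two (fun i => #(qGraph.fiber f i))
      (fun i => qGraph.indepSetFree_three.card_le_three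
        (qGraph.edgeSet_inter_fiber_subsingleton hf i))
      (fun _ _ => qGraph.eq_of_two_lt_card_fiber hf) (qGraph.sum_card_fiber f)
  have hx₀ : (f (QVert.apex r)).1 ≠ i₀ := fun h => QVert.apex_notMem_lastTwoParts hr₂
    (qGraph.fiber_subset_lastTwoParts hf (by omega) (qGraph.mem_fiber.mpr h))
  obtain ⟨w, hw, hwx₀⟩ := exists_mem_ne (by rw [htwo _ hx₀]; omega) (QVert.apex r)
  obtain ⟨p, hp, q, hq, hpq⟩ :=
    qGraph.indepSetFree_three.exists_adj_of_two_lt_card (s := qGraph.fiber f i₀) (by omega)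
  rw [qGraph.mem_fiber] at hw hp hq
  have hne {v} (hv : (f v).1 = i₀) : v ≠ QVert.apex r := fun h => hx₀ (h ▸ hv)
  exact gGraph.not_adj_and_adj_of_adj_of_fst_eq (f.map_adj (qGraph.apex_adj hr₂ hwx₀))
    hw.symm (f.map_adj hpq) (hp.trans hq.symm)
    ⟨f.map_adj (qGraph.apex_adj hr₂ (hne hp)), f.map_adj (qGraph.apex_adj hr₂ (hne hq))⟩

/-- Let `r ≥ 3` and let `Q` be the graph `Q_r` obtained from the complete
`(r+1)`-partite graph `K_{1,2,…,2}` by deleting all but two independent edges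
between the last two parts. Let `G` be obtained from a complete `r`-partite
graph with parts of size at least 2 by adding one edge `uᵢvᵢ` inside each of
the first `m` parts and deleting the edges `uᵢuⱼ` and `vᵢvⱼ` for `i ≠ j`.
Then `G` contains no copy of `Q_r`. -/
theorem stmt_12 (r m : ℕ) (hr : 3 ≤ r) (hm : m ≤ r)
    (n : Fin r → ℕ) (hn : ∀ i, 2 ≤ n i)
    (Q : SimpleGraph (Σ i : Fin (r + 1), Fin (if i.val = 0 then 1 else 2)))
    (hQ : Q = SimpleGraph.fromRel (fun a b => a.1 ≠ b.1 ∧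
      (((a.1.val = r - 1 ∧ b.1.val = r) ∨ (a.1.val = r ∧ b.1.val = r - 1)) →
        a.2.val = b.2.val)))
    (G : SimpleGraph (Σ i : Fin r, Fin (n i)))
    (hG : G = SimpleGraph.fromRel (fun a b =>
      if a.1 = b.1 then a.1.val < m ∧ a.2.val ≤ 1 ∧ b.2.val ≤ 1
      else ¬ (a.1.val < m ∧ b.1.val < m ∧ a.2.val ≤ 1 ∧ a.2.val = b.2.val))) :
    ¬ ∃ f : Q →g G, Function.Injective f :=
  stmt_12_general r m hr n Q hQ G hG
end

section
/- For all n ≥ r ≥ k ≥ 1, every n-vertex graph with no copy of K_{r+1} contains at most as many copies of K_k as the Turán graph T(n,r); i.e., ex(n, K_k, K_{r+1}) = N(K_k, T(n,r)). -/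
/-!
Induction on the number of vertices. The `k`-cliques of `G` split into those avoiding a vertex `v`
and those through `v`, which correspond to the `(k-1)`-cliques of the neighbourhood of `v`; the
latter induces a `K_r`-free graph on `deg v` vertices. Greedily extending cliques inside common
neighbourhoods shows that a `K_{r+1}`-free graph on `n` vertices has a vertex of degree at most
`n - ⌈n/r⌉`. In `T(n, r)` the same split at a vertex of a largest class is exact: deleting it
leaves `T(n-1, r)` and its neighbourhood is `T(n - ⌈n/r⌉, r-1)`, so the induction closes.
-/

open SimpleGraph

namespace Nat

/-- The `a`-th (counting from `0`) positive integer not divisible by `m + 1`. -/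
def nonMultiple (m a : ℕ) : ℕ := a + a / m + 1

lemma nonMultiple_mod {m : ℕ} (hm : 0 < m) (a : ℕ) :
    nonMultiple m a % (m + 1) = a % m + 1 := by
  have h : nonMultiple m a = (m + 1) * (a / m) + (a % m + 1) := by
    have := Nat.div_add_mod a m
    rw [nonMultiple]
    linarith
  rw [h, Nat.mul_add_mod, Nat.mod_eq_of_lt (by have := Nat.mod_lt a hm; omega)]

lemma nonMultiple_strictMono (m : ℕ) : StrictMono (nonMultiple m) := fun a b hab ↦ by
  have := Nat.div_le_div_right (c := m) hab.le
  simp only [nonMultiple]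
  omega

lemma pos_of_lt_sub_div_succ {m n a : ℕ} (ha : a < n - n / (m + 1)) : 0 < m :=
  Nat.pos_of_ne_zero fun hm ↦ by simp [hm] at ha

lemma nonMultiple_lt {m n a : ℕ} (ha : a < n - n / (m + 1)) : nonMultiple m a < n + 1 := by
  have hq : a / m ≤ n / (m + 1) := by
    by_contra! hlt
    have h1 : m * (n / (m + 1) + 1) ≤ a :=
      (Nat.mul_le_mul_left m hlt).trans (Nat.mul_div_le a m)
    have h2 : n / (m + 1) + 1 ≤ n / (m + 1) := by
      rw [Nat.le_div_iff_mul_le m.succ_pos]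
      have : a + n / (m + 1) < n := by omega
      linarith
    omega
  simp only [nonMultiple]
  omega

end Nat

namespace SimpleGraph

variable {V W : Type*} {G : SimpleGraph V}

def Copy.codRestrict {H : SimpleGraph W} (f : Copy G H) (S : Set W) (hf : ∀ v, f v ∈ S) :
    Copy G (H.induce S) :=
  ⟨⟨fun v ↦ ⟨f v, hf v⟩, f.toHom.map_adj⟩, fun _ _ h ↦ f.injective (congrArg Subtype.val h)⟩

lemma Copy.ncard_cliqueSet_le [Finite W] {H : SimpleGraph W} (f : Copy G H) (k : ℕ) :
    (G.cliqueSet k).ncard ≤ (H.cliqueSet k).ncard := by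
  have hle : G.map f.toEmbedding ≤ H :=
    (map_le_iff_le_comap _ _ _).mpr fun _ _ h ↦ f.toHom.map_adj h
  refine Set.ncard_le_ncard_of_injOn (Finset.map f.toEmbedding) ?_
    (Finset.map_injective _).injOn (Set.toFinite _)
  exact fun s hs ↦ (hs.map (f := f.toEmbedding)).mono hle

lemma ncard_cliqueSet_induce (S : Set V) (k : ℕ) :
    ((G.induce S).cliqueSet k).ncard = {s | G.IsNClique k s ∧ ↑s ⊆ S}.ncard := by
  classical
  refine Set.ncard_congr (fun s _ ↦ s.map (Function.Embedding.subtype _)) ?_ ?_ ?_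
  · intro s hs
    exact ⟨(isNClique_induce_iff _ _ _).mp hs, by simp⟩
  · exact fun s _ t _ h ↦ Finset.map_injective _ h
  · rintro s ⟨hs, hsS⟩
    refine ⟨s.subtype (· ∈ S), ?_, Finset.subtype_map_of_mem hsS⟩
    rw [mem_cliqueSet_iff, isNClique_induce_iff, Finset.subtype_map_of_mem hsS]
    exact hs

lemma ncard_cliqueSet_succ [Finite V] (v : V) (k : ℕ) :
    (G.cliqueSet (k + 1)).ncard =
      ((G.induce {v}ᶜ).cliqueSet (k + 1)).ncard +
        ((G.induce (G.neighborSet v)).cliqueSet k).ncard := by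
  classical
  have hnbr : {s | G.IsNClique k s ∧ ↑s ⊆ G.neighborSet v}.ncard =
      (G.cliqueSet (k + 1) ∩ {s | v ∈ s}).ncard := by
    refine Set.ncard_congr (fun s _ ↦ insert v s) ?_ ?_ ?_
    · rintro s ⟨hs, hsN⟩
      exact ⟨hs.insert fun b hb ↦ hsN hb, Finset.mem_insert_self v s⟩
    · rintro s t ⟨-, hs⟩ ⟨-, ht⟩ h
      have hvs : v ∉ s := fun hv ↦ G.loopless.irrefl v (hs hv)
      have hvt : v ∉ t := fun hv ↦ G.loopless.irrefl v (ht hv)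
      rw [← Finset.erase_insert hvs, ← Finset.erase_insert hvt, h]
    · rintro s ⟨hs, hv⟩
      refine ⟨s.erase v, ⟨hs.erase_of_mem hv, fun w hw ↦ ?_⟩, Finset.insert_erase hv⟩
      have hw' := Finset.mem_erase.mp hw
      exact hs.isClique hv hw'.2 (Ne.symm hw'.1)
  have hcompl : {s | G.IsNClique (k + 1) s ∧ ↑s ⊆ ({v}ᶜ : Set V)} =
      G.cliqueSet (k + 1) \ {s | v ∈ s} := by
    ext s
    simp [Set.subset_compl_singleton_iff]
  rw [ncard_cliqueSet_induce, ncard_cliqueSet_induce, hnbr, hcompl]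
  have := Set.ncard_inter_add_ncard_sdiff_eq_ncard (G.cliqueSet (k + 1)) {s | v ∈ s}
  omega

lemma CliqueFree.induce_neighborSet {r : ℕ} (hF : G.CliqueFree (r + 1)) (v : V) :
    (G.induce (G.neighborSet v)).CliqueFree r := by
  rw [cliqueFree_induce_iff, ← Set.univ_inter (G.neighborSet v)]
  exact CliqueFreeOn.of_succ G (CliqueFree.cliqueFreeOn G hF) (Set.mem_univ v)

section Degree

variable [Fintype V] [DecidableRel G.Adj] {m : ℕ}

lemma IsNClique.exists_isNClique_insert [DecidableEq V] {j : ℕ} {s : Finset V}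
    (hs : G.IsNClique j s) (hdeg : ∀ v, Fintype.card V ≤ G.degree v + m)
    (hj : j * m < Fintype.card V) : ∃ w, G.IsNClique (j + 1) (insert w s) := by
  have hnon : (s.biUnion fun x ↦ (G.neighborFinset x)ᶜ).card < (Finset.univ : Finset V).card :=
    calc (s.biUnion fun x ↦ (G.neighborFinset x)ᶜ).card
        ≤ ∑ x ∈ s, (G.neighborFinset x)ᶜ.card := Finset.card_biUnion_le
      _ ≤ ∑ _x ∈ s, m := Finset.sum_le_sum fun x _ ↦ by
          rw [Finset.card_compl, card_neighborFinset_eq_degree]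
          have := hdeg x
          omega
      _ = j * m := by rw [Finset.sum_const, hs.card_eq, smul_eq_mul]
      _ < _ := hj
  obtain ⟨w, -, hw⟩ := Finset.exists_mem_notMem_of_card_lt_card hnon
  refine ⟨w, hs.insert fun b hb ↦ ?_⟩
  simp only [Finset.mem_biUnion, Finset.mem_compl, mem_neighborFinset, not_exists, not_and,
    not_not] at hw
  exact (hw b hb).symm

lemma exists_isNClique_of_forall_card_le_degree_add (hdeg : ∀ v, Fintype.card V ≤ G.degree v + m)
    {j : ℕ} (hj : j * m < Fintype.card V) : ∃ s, G.IsNClique (j + 1) s := by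
  classical
  induction j with
  | zero =>
    obtain ⟨w, hw⟩ := (isNClique_empty.mpr rfl).exists_isNClique_insert hdeg hj
    exact ⟨_, hw⟩
  | succ j ih =>
    obtain ⟨s, hs⟩ := ih (lt_of_le_of_lt (Nat.mul_le_mul_right m j.le_succ) hj)
    obtain ⟨w, hw⟩ := hs.exists_isNClique_insert hdeg hj
    exact ⟨_, hw⟩

lemma CliqueFree.exists_degree_add_div_lt [Nonempty V] {r : ℕ} (hF : G.CliqueFree (r + 1)) :
    ∃ v, G.degree v + (Fintype.card V - 1) / r < Fintype.card V := by
  by_contra! hdeg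
  have hr : r * ((Fintype.card V - 1) / r) < Fintype.card V :=
    lt_of_le_of_lt (Nat.mul_div_le _ _) (Nat.sub_lt Fintype.card_pos one_pos)
  obtain ⟨s, hs⟩ := exists_isNClique_of_forall_card_le_degree_add hdeg hr
  exact hF s hs

end Degree

def Copy.turanGraphCastLE {a b : ℕ} (h : a ≤ b) (r : ℕ) :
    Copy (turanGraph a r) (turanGraph b r) :=
  ⟨⟨Fin.castLE h, fun hab ↦ hab⟩, Fin.castLE_injective h⟩

def Copy.turanGraphSucc (n r : ℕ) : Copy (turanGraph n r) (turanGraph (n + 1) r) :=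
  ⟨⟨Fin.succ, fun hab h ↦ hab (Nat.ModEq.add_right_cancel' 1 h)⟩, Fin.succ_injective n⟩

def Copy.turanGraphNonMultiple (n m : ℕ) :
    Copy (turanGraph (n - n / (m + 1)) m) (turanGraph (n + 1) (m + 1)) :=
  ⟨⟨fun a ↦ ⟨Nat.nonMultiple m a, Nat.nonMultiple_lt a.isLt⟩, fun {a _} hab h ↦ hab <| by
      simpa [Nat.nonMultiple_mod (Nat.pos_of_lt_sub_div_succ a.isLt)] using h⟩,
    fun _ _ h ↦ Fin.ext ((Nat.nonMultiple_strictMono m).injective (congrArg Fin.val h))⟩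

lemma turanGraph_adj_zero_nonMultiple (n m : ℕ) (a : Fin (n - n / (m + 1))) :
    (turanGraph (n + 1) (m + 1)).Adj 0 (Copy.turanGraphNonMultiple n m a) := by
  show ((0 : Fin (n + 1)) : ℕ) % (m + 1) ≠ Nat.nonMultiple m a % (m + 1)
  rw [Nat.nonMultiple_mod (Nat.pos_of_lt_sub_div_succ a.isLt)]
  simp

lemma ncard_cliqueSet_turanGraph_mono {a b : ℕ} (h : a ≤ b) (r k : ℕ) :
    ((turanGraph a r).cliqueSet k).ncard ≤ ((turanGraph b r).cliqueSet k).ncard :=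
  (Copy.turanGraphCastLE h r).ncard_cliqueSet_le k

lemma ncard_cliqueSet_turanGraph_add_le (n m k : ℕ) :
    ((turanGraph n (m + 1)).cliqueSet (k + 1)).ncard +
        ((turanGraph (n - n / (m + 1)) m).cliqueSet k).ncard ≤
      ((turanGraph (n + 1) (m + 1)).cliqueSet (k + 1)).ncard := by
  rw [ncard_cliqueSet_succ (0 : Fin (n + 1)) k]
  exact add_le_add
    (((Copy.turanGraphSucc n (m + 1)).codRestrict _ Fin.succ_ne_zero).ncard_cliqueSet_le _)
    (((Copy.turanGraphNonMultiple n m).codRestrict _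
      (turanGraph_adj_zero_nonMultiple n m)).ncard_cliqueSet_le _)

theorem CliqueFree.ncard_cliqueSet_le_turanGraph [Finite V] {r : ℕ} (hF : G.CliqueFree (r + 1))
    (k : ℕ) : (G.cliqueSet k).ncard ≤ ((turanGraph (Nat.card V) r).cliqueSet k).ncard := by
  induction hn : Nat.card V using Nat.strong_induction_on generalizing V r k with
  | _ n ih =>
  rcases k with _ | k
  · simp
  rcases n with _ | n
  · have : IsEmpty V := Finite.card_eq_zero_iff.mp hn
    have hempty : G.cliqueSet (k + 1) = ∅ := Set.eq_empty_of_forall_notMem fun s hs ↦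
      absurd hs.card_eq (by simp [Finset.eq_empty_of_isEmpty s])
    simp [hempty]
  have : Nonempty V := Finite.card_pos_iff.mp (hn ▸ n.succ_pos)
  obtain ⟨m, rfl⟩ : ∃ m, r = m + 1 := Nat.exists_eq_succ_of_ne_zero fun hr ↦ by
    subst hr
    exact not_isEmpty_of_nonempty V (cliqueFree_one.mp hF)
  classical
  let := Fintype.ofFinite V
  obtain ⟨v, hv⟩ := hF.exists_degree_add_div_lt
  rw [← Nat.card_eq_fintype_card, hn, Nat.add_sub_cancel] at hv
  have hcompl : Nat.card ({v}ᶜ : Set V) = n := by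
    rw [Nat.card_coe_set_eq, Set.ncard_compl, Set.ncard_singleton, hn, Nat.add_sub_cancel]
  have hnbr : Nat.card (G.neighborSet v) = G.degree v :=
    Nat.card_eq_fintype_card.trans (G.card_neighborSet_eq_degree v)
  calc (G.cliqueSet (k + 1)).ncard
      = ((G.induce {v}ᶜ).cliqueSet (k + 1)).ncard +
          ((G.induce (G.neighborSet v)).cliqueSet k).ncard := ncard_cliqueSet_succ v k
    _ ≤ ((turanGraph n (m + 1)).cliqueSet (k + 1)).ncard +
          ((turanGraph (G.degree v) m).cliqueSet k).ncard :=
        add_le_add (ih n n.lt_succ_self (hF.comap (Copy.induce G _).isContained) _ hcompl)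
          (ih _ ((Nat.le_add_right _ _).trans_lt hv) (hF.induce_neighborSet v) _ hnbr)
    _ ≤ ((turanGraph n (m + 1)).cliqueSet (k + 1)).ncard +
          ((turanGraph (n - n / (m + 1)) m).cliqueSet k).ncard :=
        Nat.add_le_add_left (ncard_cliqueSet_turanGraph_mono (by omega) m k) _
    _ ≤ ((turanGraph (n + 1) (m + 1)).cliqueSet (k + 1)).ncard :=
        ncard_cliqueSet_turanGraph_add_le n m k

end SimpleGraph

theorem stmt_14_general (n r k : ℕ)
    (G : SimpleGraph (Fin n)) (hF : G.CliqueFree (r + 1)) :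
    {s : Finset (Fin n) | G.IsNClique k s}.ncard ≤
      {s : Finset (Fin n) | (SimpleGraph.turanGraph n r).IsNClique k s}.ncard := by
  have := hF.ncard_cliqueSet_le_turanGraph k
  rwa [Nat.card_fin] at this

/-- Zykov's theorem: for `n ≥ r ≥ k ≥ 1`, every `n`-vertex `K_{r+1}`-free graph
contains at most as many copies of `K_k` as the Turán graph `T(n,r)`. -/
theorem stmt_14 (n r k : ℕ) (h1 : 1 ≤ k) (h2 : k ≤ r) (h3 : r ≤ n)
    (G : SimpleGraph (Fin n)) (hF : G.CliqueFree (r + 1)) :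
    {s : Finset (Fin n) | G.IsNClique k s}.ncard ≤
      {s : Finset (Fin n) | (SimpleGraph.turanGraph n r).IsNClique k s}.ncard :=
  stmt_14_general n r k G hF
end
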